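/- For every n ≥ 1, the number s_n of sparse paving matroids on the ground set {1,...,n} satisfies s_n ≥ 2^{C(n,⌊n/2⌋)/n}; equivalently, log s_n ≥ (1/n) C(n, ⌊n/2⌋). -/

import Mathlib

open Filter
open scoped symmDiff

variable {α : Type*}

/-- The rank of a matroid: the common cardinality of its bases. -/
noncomputable def Matroid.rnk (M : Matroid α) : ℕ :=
  sSup {k | ∃ B, M.IsBase B ∧ B.ncard = k}

/-- The rank function of a matroid. -/
noncomputable def Matroid.rkFun (M : Matroid α) (X : Set α) : ℕ :=
  sSup {k | ∃ I, I ⊆ X ∧ M.Indep I ∧ I.ncard = k}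

/-- A circuit: a minimal dependent set. -/
def Matroid.IsCircuitSet (M : Matroid α) (C : Set α) : Prop :=
  M.Dep C ∧ ∀ D ⊂ C, M.Indep D

/-- A cocircuit: a circuit of the dual. -/
def Matroid.IsCocircuitSet (M : Matroid α) (D : Set α) : Prop :=
  M✶.IsCircuitSet D

/-- A matroid is paving if every circuit has cardinality at least the rank. -/
def Matroid.Paving (M : Matroid α) : Prop :=
  ∀ C, M.IsCircuitSet C → M.rnk ≤ C.ncard

/-- Sparse paving: both the matroid and its dual are paving. -/
def Matroid.SparsePaving (M : Matroid α) : Prop :=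
  M.Paving ∧ M✶.Paving

/-- A matroid has no loops iff every singleton of the ground set is independent. -/
def Matroid.LoopFree (M : Matroid α) : Prop :=
  ∀ e ∈ M.E, M.Indep {e}

/-- A matroid has no coloops iff its dual has no loops. -/
def Matroid.ColoopFree (M : Matroid α) : Prop :=
  M✶.LoopFree

/-- A flat: a set whose rank increases upon adding any element of the ground set outside it. -/
def Matroid.IsFlatSet (M : Matroid α) (F : Set α) : Prop :=
  F ⊆ M.E ∧ ∀ e ∈ M.E \ F, M.rkFun F < M.rkFun (F ∪ {e})

/-- The number of matroids on ground set `{1, …, n}`. -/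
noncomputable def numMatroids (n : ℕ) : ℕ :=
  Nat.card {M : Matroid (Fin n) // M.E = Set.univ}

/-- The number of sparse paving matroids on ground set `{1, …, n}`. -/
noncomputable def numSparsePaving (n : ℕ) : ℕ :=
  Nat.card {M : Matroid (Fin n) // M.E = Set.univ ∧ M.SparsePaving}

/-- The number of loopless, coloopless matroids on ground set `{1, …, n}`. -/
noncomputable def numMatroidsNoLoopColoop (n : ℕ) : ℕ :=
  Nat.card {M : Matroid (Fin n) // M.E = Set.univ ∧ M.LoopFree ∧ M.ColoopFree}

/-- Number of rank-`r` loopless, coloopless matroids on `{1, …, n}`. -/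
noncomputable def numMatroidsNoLoopColoopRk (n r : ℕ) : ℕ :=
  Nat.card {M : Matroid (Fin n) // M.E = Set.univ ∧ M.rnk = r ∧ M.LoopFree ∧ M.ColoopFree}

/-- Number of rank-`r` sparse paving matroids on `{1, …, n}`. -/
noncomputable def numSparsePavingRk (n r : ℕ) : ℕ :=
  Nat.card {M : Matroid (Fin n) // M.E = Set.univ ∧ M.rnk = r ∧ M.SparsePaving}

/-- The Johnson graph `J(E, r)` on the `r`-element subsets of a type. -/
def johnsonGraph (α : Type*) [DecidableEq α] (r : ℕ) :
    SimpleGraph {X : Finset α // X.card = r} where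
  Adj X Y := (X.1 ∆ Y.1).card = 2
  symm := ⟨by intro X Y h; rwa [symmDiff_comm]⟩
  loopless := ⟨by intro X h; simp [symmDiff_self] at h⟩

/-- A stable (independent) set of vertices in a graph. -/
def SimpleGraph.IsStableSet {V : Type*} (G : SimpleGraph V) (s : Set V) : Prop :=
  ∀ ⦃x⦄, x ∈ s → ∀ ⦃y⦄, y ∈ s → ¬ G.Adj x y

/-- The number of stable sets of a graph. -/
noncomputable def numStableSets {V : Type*} (G : SimpleGraph V) : ℕ :=
  Nat.card {s : Set V // G.IsStableSet s}


/-! A family `A` of `r`-subsets of a finite set `E`, no two of which differ by swapping a single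
element (a stable set of the Johnson graph `J(E, r)`), is the set of non-bases of a sparse paving
matroid whose bases are the other `r`-subsets, and different families give different matroids.
Hence `s_n` is at least the number of stable sets of `J(n, ⌊n/2⌋)`, which is at least `2 ^ #T` for
any single stable set `T`. Classifying the `r`-subsets of `ℤ/n` by the sum of their elements splits
them into `n` stable sets, the largest of which has at least `C(n, r) / n` members. -/

open Finset

namespace Finset

variable [DecidableEq α]

lemma insert_symmDiff_insert {t : Finset α} {e f : α} (he : e ∉ t) (hf : f ∉ t) (hef : e ≠ f) :
    insert e t ∆ insert f t = {e, f} := by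
  ext x
  simp only [mem_symmDiff, mem_insert, mem_singleton]
  grind

lemma card_symmDiff_ne_two_of_sum_eq [AddCancelCommMonoid α] {X Y : Finset α}
    (hcard : #X = #Y) (hsum : ∑ x ∈ X, x = ∑ y ∈ Y, y) : #(X ∆ Y) ≠ 2 := by
  intro h2
  have hsplit : #(X ∆ Y) = #(X \ Y) + #(Y \ X) := by
    rw [symmDiff_def, sup_eq_union, card_union_of_disjoint disjoint_sdiff_sdiff]
  have hcomm : #(X \ Y) = #(Y \ X) := card_sdiff_comm hcard
  obtain ⟨x, hx⟩ := card_eq_one.mp (show #(X \ Y) = 1 by omega)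
  obtain ⟨y, hy⟩ := card_eq_one.mp (show #(Y \ X) = 1 by omega)
  have hxy : x = y := by simpa [hx, hy] using sum_sdiff_eq_sum_sdiff_iff.mpr hsum
  have hxX : x ∈ X \ Y := by simp [hx]
  have hyY : y ∈ Y \ X := by simp [hy]
  exact (mem_sdiff.mp hxX).2 (hxy ▸ (mem_sdiff.mp hyY).1)

section StableFamily

variable {A : Set (Finset α)} {r : ℕ}

lemma exists_insert_notMem (hA : ∀ X ∈ A, ∀ Y ∈ A, #(X ∆ Y) ≠ 2) {s t : Finset α}
    (hs : 1 < #s) (hst : Disjoint s t) : ∃ e ∈ s, insert e t ∉ A := by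
  obtain ⟨e, he, f, hf, hef⟩ := one_lt_card.mp hs
  by_contra! h
  refine hA _ (h e he) _ (h f hf) ?_
  rw [insert_symmDiff_insert (disjoint_left.mp hst he) (disjoint_left.mp hst hf) hef,
    card_pair hef]

lemma exists_card_eq_notMem (hA : ∀ X ∈ A, ∀ Y ∈ A, #(X ∆ Y) ≠ 2) {t u : Finset α}
    (htu : t ⊆ u) (ht : #t < r) (hu : r < #u) : ∃ X, t ⊆ X ∧ X ⊆ u ∧ #X = r ∧ X ∉ A := by
  obtain ⟨s, hts, hsu, hs⟩ := exists_subsuperset_card_eq htu (n := r - 1) (by omega) (by omega)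
  obtain ⟨e, he, heA⟩ := exists_insert_notMem hA (s := u \ s) (t := s)
    (by rw [card_sdiff_of_subset hsu]; omega) sdiff_disjoint
  rw [mem_sdiff] at he
  exact ⟨insert e s, hts.trans (subset_insert e s), insert_subset he.1 hsu,
    by rw [card_insert_of_notMem he.2]; omega, heA⟩

lemma exists_insert_erase_notMem (hA : ∀ X ∈ A, ∀ Y ∈ A, #(X ∆ Y) ≠ 2) {X Y : Finset α}
    (hX : #X = r) (hY : #Y = r) (hYA : Y ∉ A) {e : α} (he : e ∈ X \ Y) :
    ∃ f ∈ Y \ X, #(insert f (X.erase e)) = r ∧ insert f (X.erase e) ∉ A := by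
  obtain ⟨heX, heY⟩ := mem_sdiff.mp he
  have hcomm : #(Y \ X) = #(X \ Y) := card_sdiff_comm (hY.trans hX.symm)
  have hcard : ∀ f ∉ X, #(insert f (X.erase e)) = r := fun f hf => by
    rw [card_insert_of_notMem (fun h => hf (mem_of_mem_erase h)), card_erase_of_mem heX]
    have := card_pos.mpr ⟨e, heX⟩
    omega
  obtain hone | htwo : #(Y \ X) = 1 ∨ 1 < #(Y \ X) := by
    have := card_pos.mpr ⟨e, he⟩
    omega
  · obtain ⟨f, hf⟩ := card_eq_one.mp hone
    have hfYX : f ∈ Y \ X := by simp [hf]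
    have hXY : X \ Y ⊆ {e} := fun z hz =>
      mem_singleton.mpr (card_le_one.mp (hcomm ▸ hone).le z hz e he)
    have hfY : insert f (X.erase e) = Y := by
      refine eq_of_subset_of_card_le (insert_subset (mem_sdiff.mp hfYX).1 fun z hz => ?_) ?_
      · obtain ⟨hze, hzX⟩ := mem_erase.mp hz
        by_contra hzY
        exact hze (mem_singleton.mp (hXY (mem_sdiff.mpr ⟨hzX, hzY⟩)))
      · rw [hY, hcard f (mem_sdiff.mp hfYX).2]
    exact ⟨f, hfYX, hfY ▸ hY, hfY ▸ hYA⟩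
  · obtain ⟨f, hf, hfA⟩ := exists_insert_notMem hA htwo
      (disjoint_of_subset_right (erase_subset e X) sdiff_disjoint)
    exact ⟨f, hf, hcard f (mem_sdiff.mp hf).2, hfA⟩

end StableFamily

end Finset

namespace Matroid

variable {M : Matroid α}

lemma IsBase.rnk_eq {B : Set α} (hB : M.IsBase B) : M.rnk = B.ncard := by
  have hranks : {k | ∃ B, M.IsBase B ∧ B.ncard = k} = {B.ncard} := by
    ext k
    constructor
    · rintro ⟨B', hB', rfl⟩
      exact hB'.ncard_eq_ncard_of_isBase hB
    · rintro rfl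
      exact ⟨B, hB, rfl⟩
  rw [rnk, hranks, csSup_singleton]

lemma paving_of_forall_indep (h : ∀ I ⊆ M.E, I.ncard < M.rnk → M.Indep I) : M.Paving :=
  fun C hC => not_lt.mp fun hlt => hC.1.not_indep (h C hC.1.subset_ground hlt)

lemma SparsePaving.dual (h : M.SparsePaving) : M✶.SparsePaving :=
  ⟨h.2, (dual_dual M).symm ▸ h.1⟩

lemma freeOn_sparsePaving (E : Set α) : (freeOn E).SparsePaving := by
  refine ⟨paving_of_forall_indep fun I hI _ => freeOn_indep hI, fun C _ => ?_⟩
  rw [freeOn_dual_eq, (loopyOn_isBase_iff.mpr rfl : (loopyOn E).IsBase ∅).rnk_eq, Set.ncard_empty]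
  exact Nat.zero_le _

lemma loopyOn_sparsePaving (E : Set α) : (loopyOn E).SparsePaving := by
  simpa using (freeOn_sparsePaving E).dual

end Matroid

instance instFiniteMatroid [Finite α] : Finite (Matroid α) :=
  Finite.of_injective (fun M => (M.E, M.Indep)) fun M N h => by
    simp only [Prod.mk.injEq] at h
    exact Matroid.ext_indep h.1 fun I _ => by rw [h.2]

section SparsePavingMatroid

variable [Fintype α] [DecidableEq α] {r : ℕ} {A : Set (Finset α)}

def sparsePavingMatroid (r : ℕ) (A : Set (Finset α)) (hA : ∀ X ∈ A, ∀ Y ∈ A, #(X ∆ Y) ≠ 2)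
    (hr0 : 0 < r) (hr : r < Fintype.card α) : Matroid α :=
  Matroid.ofIsBaseOfFinite Set.finite_univ (fun B => ∃ X : Finset α, #X = r ∧ X ∉ A ∧ ↑X = B)
    (exists_isBase := by
      obtain ⟨X, -, -, hX, hXA⟩ :=
        exists_card_eq_notMem hA (empty_subset univ) (by simpa) (by simpa)
      exact ⟨X, X, hX, hXA, rfl⟩)
    (isBase_exchange := by
      rintro _ _ ⟨X, hX, -, rfl⟩ ⟨Y, hY, hYA, rfl⟩ e he
      obtain ⟨f, hf, hfr, hfA⟩ := exists_insert_erase_notMem hA hX hY hYA (by exact_mod_cast he)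
      exact ⟨f, by exact_mod_cast hf, _, hfr, hfA, by simp⟩)
    (subset_ground := fun _ _ => Set.subset_univ _)

variable {hA : ∀ X ∈ A, ∀ Y ∈ A, #(X ∆ Y) ≠ 2} {hr0 : 0 < r} {hr : r < Fintype.card α}

lemma sparsePavingMatroid_E : (sparsePavingMatroid r A hA hr0 hr).E = Set.univ :=
  rfl

lemma sparsePavingMatroid_isBase_iff {B : Set α} :
    (sparsePavingMatroid r A hA hr0 hr).IsBase B ↔ ∃ X : Finset α, #X = r ∧ X ∉ A ∧ ↑X = B :=
  Iff.rfl

lemma sparsePavingMatroid_isBase_coe_iff {X : Finset α} :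
    (sparsePavingMatroid r A hA hr0 hr).IsBase ↑X ↔ #X = r ∧ X ∉ A := by
  simp [sparsePavingMatroid_isBase_iff]

lemma sparsePavingMatroid_rnk : (sparsePavingMatroid r A hA hr0 hr).rnk = r := by
  obtain ⟨B, hB⟩ := (sparsePavingMatroid r A hA hr0 hr).exists_isBase
  obtain ⟨X, hX, -, rfl⟩ := sparsePavingMatroid_isBase_iff.mp hB
  rw [hB.rnk_eq, Set.ncard_coe_finset, hX]

lemma sparsePavingMatroid_dual_rnk :
    (sparsePavingMatroid r A hA hr0 hr)✶.rnk = Fintype.card α - r := by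
  obtain ⟨B, hB⟩ := (sparsePavingMatroid r A hA hr0 hr).exists_isBase
  obtain ⟨X, hX, -, rfl⟩ := sparsePavingMatroid_isBase_iff.mp hB
  rw [hB.compl_isBase_dual.rnk_eq, sparsePavingMatroid_E, ← Set.compl_eq_univ_sdiff, ← coe_compl,
    Set.ncard_coe_finset, card_compl, hX]

lemma sparsePavingMatroid_indep_of_card_lt {s : Finset α} (hs : #s < r) :
    (sparsePavingMatroid r A hA hr0 hr).Indep ↑s := by
  obtain ⟨X, hsX, -, hX, hXA⟩ := exists_card_eq_notMem hA (subset_univ s) hs (by simpa)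
  exact (sparsePavingMatroid_isBase_coe_iff.mpr ⟨hX, hXA⟩).indep.subset (coe_subset.mpr hsX)

lemma sparsePavingMatroid_dual_indep_of_card_lt {s : Finset α} (hs : #s < Fintype.card α - r) :
    (sparsePavingMatroid r A hA hr0 hr)✶.Indep ↑s := by
  obtain ⟨X, -, hXs, hX, hXA⟩ := exists_card_eq_notMem hA (empty_subset sᶜ) (by simpa)
    (by rw [card_compl]; omega)
  rw [Matroid.dual_indep_iff_exists']
  exact ⟨Set.subset_univ _, _, sparsePavingMatroid_isBase_coe_iff.mpr ⟨hX, hXA⟩,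
    disjoint_coe.mpr (subset_compl_iff_disjoint_left.mp hXs)⟩

lemma sparsePavingMatroid_sparsePaving : (sparsePavingMatroid r A hA hr0 hr).SparsePaving := by
  constructor
  · refine Matroid.paving_of_forall_indep fun I _ hI => ?_
    obtain ⟨s, rfl⟩ := I.toFinite.exists_finset_coe
    rw [Set.ncard_coe_finset, sparsePavingMatroid_rnk] at hI
    exact sparsePavingMatroid_indep_of_card_lt hI
  · refine Matroid.paving_of_forall_indep fun I _ hI => ?_
    obtain ⟨s, rfl⟩ := I.toFinite.exists_finset_coe
    rw [Set.ncard_coe_finset, sparsePavingMatroid_dual_rnk] at hI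
    exact sparsePavingMatroid_dual_indep_of_card_lt hI

end SparsePavingMatroid

lemma SimpleGraph.IsStableSet.card_symmDiff_ne_two [DecidableEq α] {r : ℕ}
    {S : Set {X : Finset α // #X = r}} (hS : (johnsonGraph α r).IsStableSet S) :
    ∀ X ∈ Subtype.val '' S, ∀ Y ∈ Subtype.val '' S, #(X ∆ Y) ≠ 2 := by
  rintro _ ⟨X, hX, rfl⟩ _ ⟨Y, hY, rfl⟩
  exact hS hX hY

lemma johnsonGraph_isStableSet_sum_eq [AddCancelCommMonoid α] [DecidableEq α] (r : ℕ) (g : α) :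
    (johnsonGraph α r).IsStableSet {X | ∑ x ∈ X.1, x = g} :=
  fun X hX Y hY => card_symmDiff_ne_two_of_sum_eq (X.2.trans Y.2.symm) (hX.trans hY.symm)

lemma exists_johnsonGraph_isStableSet_card_ge [Fintype α] [AddCommGroup α] [DecidableEq α]
    (r : ℕ) : ∃ T : Finset {X : Finset α // #X = r}, (johnsonGraph α r).IsStableSet ↑T ∧
      ((Fintype.card α).choose r : ℝ) / Fintype.card α ≤ #T := by
  obtain ⟨g, hg⟩ := Fintype.exists_le_card_fiber_of_nsmul_le_card
    (f := fun X : {X : Finset α // #X = r} => ∑ x ∈ X.1, x)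
    (b := ((Fintype.card α).choose r : ℝ) / Fintype.card α) (by
      rw [nsmul_eq_mul, mul_div_cancel₀ _ (by exact_mod_cast Fintype.card_ne_zero),
        Fintype.card_finset_len])
  exact ⟨_, fun X hX Y hY => johnsonGraph_isStableSet_sum_eq r g (mem_filter.mp hX).2
    (mem_filter.mp hY).2, hg⟩

lemma SimpleGraph.two_pow_card_le_numStableSets {V : Type*} [Finite V] (G : SimpleGraph V)
    {T : Finset V} (hT : G.IsStableSet ↑T) : 2 ^ #T ≤ numStableSets G := by
  let stableSubset (s : T.powerset) : {s : Set V // G.IsStableSet s} :=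
    ⟨s.1, fun x hx y hy => hT (mem_powerset.mp s.2 hx) (mem_powerset.mp s.2 hy)⟩
  have hinj : Function.Injective stableSubset := fun s t h =>
    Subtype.ext (coe_inj.mp (congrArg Subtype.val h))
  rw [numStableSets, ← card_powerset, ← Nat.card_eq_finsetCard]
  exact Nat.card_le_card_of_injective stableSubset hinj

lemma two_le_numSparsePaving {n : ℕ} (hn : n ≠ 0) : 2 ≤ numSparsePaving n := by
  have hne : Matroid.freeOn (Set.univ : Set (Fin n)) ≠ Matroid.loopyOn Set.univ := fun h => by
    have hI := Matroid.freeOn_indep (subset_refl (Set.univ : Set (Fin n)))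
    rw [h, Matroid.loopyOn_indep_iff, Set.univ_eq_empty_iff] at hI
    exact hI.false ⟨0, by omega⟩
  have : Nontrivial {M : Matroid (Fin n) // M.E = Set.univ ∧ M.SparsePaving} :=
    nontrivial_of_ne ⟨_, rfl, Matroid.freeOn_sparsePaving _⟩
      ⟨_, rfl, Matroid.loopyOn_sparsePaving _⟩ fun h => hne (congrArg Subtype.val h)
  exact Finite.one_lt_card

lemma numStableSets_johnsonGraph_le_numSparsePaving {n r : ℕ} (hr0 : 0 < r) (hrn : r < n) :
    numStableSets (johnsonGraph (Fin n) r) ≤ numSparsePaving n := by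
  let toMatroid (S : {S // (johnsonGraph (Fin n) r).IsStableSet S}) :
      {M : Matroid (Fin n) // M.E = Set.univ ∧ M.SparsePaving} :=
    ⟨sparsePavingMatroid r _ S.2.card_symmDiff_ne_two hr0 (by simpa), rfl,
      sparsePavingMatroid_sparsePaving⟩
  refine Nat.card_le_card_of_injective toMatroid fun S T h => ?_
  ext X
  have := congrArg (fun M => M.1.IsBase (X.1 : Set (Fin n))) h
  simpa [toMatroid, sparsePavingMatroid_isBase_coe_iff, X.2, not_iff_not] using this

/-- `s_n ≥ 2^{C(n,⌊n/2⌋)/n}` for every `n ≥ 1`. -/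
theorem sparsePaving_lower (n : ℕ) (hn : 1 ≤ n) :
    (2 : ℝ) ^ ((n.choose (n / 2) : ℝ) / n) ≤ (numSparsePaving n : ℝ) := by
  obtain rfl | hn2 : n = 1 ∨ 2 ≤ n := by omega
  · norm_num
    exact_mod_cast two_le_numSparsePaving one_ne_zero
  have : NeZero n := ⟨by omega⟩
  obtain ⟨T, hT, hTcard⟩ := exists_johnsonGraph_isStableSet_card_ge (α := Fin n) (n / 2)
  rw [Fintype.card_fin] at hTcard
  calc (2 : ℝ) ^ ((n.choose (n / 2) : ℝ) / n)
      ≤ 2 ^ (#T : ℝ) := Real.rpow_le_rpow_of_exponent_le one_le_two hTcard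
    _ = ((2 ^ #T : ℕ) : ℝ) := by norm_num
    _ ≤ numStableSets (johnsonGraph (Fin n) (n / 2)) := by
      exact_mod_cast (johnsonGraph (Fin n) (n / 2)).two_pow_card_le_numStableSets hT
    _ ≤ numSparsePaving n := by
      exact_mod_cast numStableSets_johnsonGraph_le_numSparsePaving (by omega) (by omega)
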